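/- (Abuaf, surface case of the spanning lemma) Let X be a smooth complex projective surface. Then the subspace of the rational Hodge ring Hdg*(X) = H^0(X,Q) ⊕ (H^2(X,Q) ∩ H^{1,1}) ⊕ H^4(X,Q) spanned by Chern characters of line bundles is all of Hdg*(X). -/

import Mathlib

/-!
STATEMENT 13 (Abuaf, surface case of the spanning lemma): For a smooth complex
projective surface, `Hdg*(X) = H⁰(X,ℚ) ⊕ Hdg²(X) ⊕ H⁴(X,ℚ)` is spanned by
Chern characters of line bundles.  Model: `H⁰ = ℚ`, `H⁴ = ℚ·[pt]`,
`V₂ = Hdg²(X)` a finite-dimensional ℚ-vector space with the symmetric cup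
product pairing `B : V₂ × V₂ → H⁴ = ℚ`; divisor classes `D i` span `V₂` with
`D i₀` ample (`B (D i₀) (D i₀) = d > 0`); Chern characters of line bundles
`O(D)` for `D` in the ℤ-span of the `D i` are the vectors `(1, D, B D D / 2)`;
these span all of `ℚ × V2 × ℚ` over `ℚ`.
-/

theorem stmt13 {V2 : Type} [AddCommGroup V2] [Module ℚ V2] [FiniteDimensional ℚ V2]
    (B : V2 →ₗ[ℚ] V2 →ₗ[ℚ] ℚ) (hsymm : ∀ v w : V2, B v w = B w v)
    {ι : Type} (D : ι → V2)
    (hspan : Submodule.span ℚ (Set.range D) = ⊤)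
    (i0 : ι) (hample : 0 < B (D i0) (D i0)) :
    Submodule.span ℚ
        {x : ℚ × V2 × ℚ | ∃ v ∈ Submodule.span ℤ (Set.range D),
          x = (1, v, B v v / 2)} = ⊤ := by
  set S := Submodule.span ℚ
      {x : ℚ × V2 × ℚ | ∃ v ∈ Submodule.span ℤ (Set.range D),
        x = (1, v, B v v / 2)} with hS
  have hmem : ∀ v ∈ Submodule.span ℤ (Set.range D),
      ((1 : ℚ), v, B v v / 2) ∈ S := fun v hv =>
    Submodule.subset_span ⟨v, hv, rfl⟩
  have h0 : ((1 : ℚ), (0 : V2), (0 : ℚ)) ∈ S := by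
    have := hmem 0 (Submodule.zero_mem _)
    simpa using this
  set d : ℚ := B (D i0) (D i0) with hd
  have hDi0 : D i0 ∈ Submodule.span ℤ (Set.range D) :=
    Submodule.subset_span ⟨i0, rfl⟩
  have h2Di0 : (2 : ℤ) • D i0 ∈ Submodule.span ℤ (Set.range D) :=
    Submodule.smul_mem _ _ hDi0
  have hptd : ((0 : ℚ), (0 : V2), d) ∈ S := by
    have h1 := hmem _ h2Di0
    have h2 := hmem _ hDi0
    have key : ((0 : ℚ), (0 : V2), d)
        = ((1 : ℚ), (2:ℤ) • D i0, B ((2:ℤ) • D i0) ((2:ℤ) • D i0) / 2)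
          - (2 : ℚ) • ((1 : ℚ), D i0, B (D i0) (D i0) / 2)
          + ((1 : ℚ), (0 : V2), (0 : ℚ)) := by
      have : B ((2:ℤ) • D i0) ((2:ℤ) • D i0) = 4 * d := by
        simp [hd]; ring
      ext <;> simp [this, Prod.smul_def, ← Int.cast_smul_eq_zsmul ℚ] <;> ring
    rw [key]
    exact Submodule.add_mem _ (Submodule.sub_mem _ h1 (Submodule.smul_mem _ _ h2)) h0
  have hpt : ∀ c : ℚ, ((0 : ℚ), (0 : V2), c) ∈ S := by
    intro c
    have := Submodule.smul_mem S (c / d) hptd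
    have hdne : d ≠ 0 := ne_of_gt hample
    simpa [Prod.smul_def, div_mul_cancel₀, hdne] using this
  have hv2 : ∀ v ∈ Submodule.span ℤ (Set.range D),
      ((0 : ℚ), v, (0 : ℚ)) ∈ S := by
    intro v hv
    have key : ((0 : ℚ), v, (0 : ℚ))
        = ((1 : ℚ), v, B v v / 2) - ((1 : ℚ), (0 : V2), (0 : ℚ))
          - ((0 : ℚ), (0 : V2), B v v / 2) := by
      ext <;> simp
    rw [key]
    exact Submodule.sub_mem _ (Submodule.sub_mem _ (hmem v hv) h0) (hpt _)
  -- the set of v with (0, v, 0) ∈ S is a ℚ-submodule containing all D i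
  have hvall : ∀ v : V2, ((0 : ℚ), v, (0 : ℚ)) ∈ S := by
    intro v
    let f : V2 →ₗ[ℚ] ℚ × V2 × ℚ :=
      (LinearMap.inr ℚ ℚ (V2 × ℚ)).comp (LinearMap.inl ℚ V2 ℚ)
    have hT : Submodule.span ℚ (Set.range D) ≤ S.comap f := by
      rw [Submodule.span_le]
      rintro _ ⟨i, rfl⟩
      exact hv2 (D i) (Submodule.subset_span ⟨i, rfl⟩)
    have : v ∈ S.comap f := by
      rw [hspan] at hT
      exact hT Submodule.mem_top
    simpa [f] using this
  rw [eq_top_iff]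
  rintro ⟨a, v, c⟩ -
  have key : ((a : ℚ), v, c)
      = a • ((1 : ℚ), (0 : V2), (0 : ℚ)) + ((0 : ℚ), v, (0 : ℚ))
        + ((0 : ℚ), (0 : V2), c) := by
    ext <;> simp
  rw [key]
  exact Submodule.add_mem _ (Submodule.add_mem _ (Submodule.smul_mem _ _ h0) (hvall v)) (hpt c)
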